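/- arXiv:2405.02739 — 3 statements merged into one kernel-verified Lean document; each statement's English description precedes it below -/
import Mathlib

section
/- Assume the split type: n odd with ε = −1, or n even with ε = +1. Let M be an ε-representation of the equioriented type A_n quiver with underlying graded space (M^0, ⟨−,−⟩), and let N ⊆ M be a subrepresentation (a family of subspaces N_i ⊆ M_i with f^M_i(N_i) ⊆ N_{i+1} for all 1 ≤ i ≤ n−1) which, regarded as a representation of the equioriented type A_n quiver, is indecomposable, i.e. N is nonzero and is not isomorphic to a direct sum of two nonzero representations. Then N^0 := N_1 ⊕ ⋯ ⊕ N_n is an isotropic subspace of M^0, i.e. ⟨x, y⟩ = 0 for all x, y ∈ N^0. -/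
open Module

/-- A representation of the equioriented type `A_n` quiver over `ℂ`: finite-dimensional
complex vector spaces `V i` (only the indices `1 ≤ i ≤ n` carry content, the spaces at
index `0` and at indices `> n` are required to be trivial) together with linear maps
`f i : V i → V (i+1)`. -/
structure ARep (n : ℕ) where
  V : ℕ → Type
  [instAddCommGroup : ∀ i, AddCommGroup (V i)]
  [instModule : ∀ i, Module ℂ (V i)]
  [instFiniteDimensional : ∀ i, FiniteDimensional ℂ (V i)]
  f : ∀ i, V i →ₗ[ℂ] V (i + 1)
  triv : ∀ i, i = 0 ∨ n < i → Subsingleton (V i)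

attribute [instance] ARep.instAddCommGroup ARep.instModule ARep.instFiniteDimensional

namespace ARep

/-- The composite map `f_{i,i+k} : M_i → M_{i+k}` (the identity for `k = 0`). -/
noncomputable def F {n : ℕ} (M : ARep n) (i : ℕ) : (k : ℕ) → (M.V i →ₗ[ℂ] M.V (i + k))
  | 0 => LinearMap.id
  | (k + 1) => (M.f (i + k)).comp (M.F i k)

/-- The rank sequence `r^M_{i,j} = rank f_{i,j}`.  (For `i = 0` the source space is
trivial and for `j = n+1` the target space is trivial, so the conventions
`r^M_{0,·} = 0 = r^M_{·,n+1}` hold automatically.) -/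
noncomputable def r {n : ℕ} (M : ARep n) (i j : ℕ) : ℕ :=
  Module.finrank ℂ (LinearMap.range (M.F i (j - i)))

end ARep

/-- A morphism of representations of the equioriented type `A_n` quiver. -/
structure ARepHom {n : ℕ} (M N : ARep n) where
  φ : ∀ i, M.V i →ₗ[ℂ] N.V i
  comm : ∀ i, (φ (i + 1)).comp (M.f i) = (N.f i).comp (φ i)

/-- Two representations are isomorphic if there is a morphism all of whose components
are bijective. -/
def ARepIso {n : ℕ} (M N : ARep n) : Prop :=
  ∃ h : ARepHom M N, ∀ i, Function.Bijective (h.φ i)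

/-- The condition for the interval representation `U_{i,j}` to have a nonzero space at
vertex `k`. -/
def Ucond (n i j k : ℕ) : Prop := 1 ≤ k ∧ k ≤ n ∧ i ≤ k ∧ k ≤ j

instance (n i j k : ℕ) : Decidable (Ucond n i j k) := by unfold Ucond; infer_instance

/-- The space of `U_{i,j}` at vertex `k`, realized as a submodule of `ℂ`. -/
noncomputable def Uspace (n i j k : ℕ) : Submodule ℂ ℂ := if Ucond n i j k then ⊤ else ⊥

/-- The indecomposable interval representation `U_{i,j}` (for `1 ≤ i ≤ j ≤ n`):
one-dimensional at the vertices `i ≤ k ≤ j`, zero elsewhere, with identity structure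
maps inside the interval. -/
noncomputable def Urep (n i j : ℕ) : ARep n where
  V k := ↥(Uspace n i j k)
  f k := LinearMap.restrict
    (if Ucond n i j k ∧ Ucond n i j (k + 1) then (LinearMap.id : ℂ →ₗ[ℂ] ℂ) else 0)
    (p := Uspace n i j k) (q := Uspace n i j (k + 1))
    (by
      intro x hx
      by_cases h : Ucond n i j k ∧ Ucond n i j (k + 1)
      · rw [if_pos h]
        simp [Uspace, if_pos h.2]
      · rw [if_neg h]
        simp)
  triv k hk := by
    have hbot : Uspace n i j k = ⊥ := by
      simp only [Uspace]; rw [if_neg]; unfold Ucond; omega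
    have h0 := (Submodule.eq_bot_iff _).mp hbot
    exact ⟨fun a b => Subtype.ext ((h0 a.1 a.2).trans (h0 b.1 b.2).symm)⟩

/-- The componentwise direct sum of two representations. -/
noncomputable def ARep.dsum {n : ℕ} (M N : ARep n) : ARep n where
  V i := M.V i × N.V i
  f i := (M.f i).prodMap (N.f i)
  triv i hi := by
    haveI := M.triv i hi
    haveI := N.triv i hi
    exact ⟨fun a b => Prod.ext (Subsingleton.elim _ _) (Subsingleton.elim _ _)⟩

/-- A representation is nonzero if some vector space is nonzero. -/
def ARep.Nonzero {n : ℕ} (M : ARep n) : Prop := ∃ i, ∃ v : M.V i, v ≠ 0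

/-- The index set of segments `1 ≤ i ≤ j ≤ n`. -/
def SegIdx (n : ℕ) : Type :=
  {p : Fin (n + 1) × Fin (n + 1) // 1 ≤ p.1.1 ∧ p.1.1 ≤ p.2.1}

instance (n : ℕ) : Fintype (SegIdx n) := by unfold SegIdx; infer_instance

/-- The direct sum `⊕_{1 ≤ i ≤ j ≤ n} U_{i,j}^{⊕ m i j}`, taken componentwise. -/
noncomputable def sumU (n : ℕ) (m : ℕ → ℕ → ℕ) : ARep n where
  V k := ∀ p : SegIdx n, Fin (m p.1.1.1 p.1.2.1) → (Urep n p.1.1.1 p.1.2.1).V k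
  f k := LinearMap.pi fun p =>
    (((Urep n p.1.1.1 p.1.2.1).f k).compLeft (Fin (m p.1.1.1 p.1.2.1))).comp
      (LinearMap.proj p)
  triv k hk := by
    haveI := fun p : SegIdx n => (Urep n p.1.1.1 p.1.2.1).triv k hk
    exact ⟨fun a b => funext fun p => Subsingleton.elim _ _⟩

/-- The space of morphisms `Hom(M,N)` realized as a subspace of the product of the
spaces of componentwise linear maps. -/
noncomputable def HomSubspace {n : ℕ} (M N : ARep n) :
    Submodule ℂ (∀ k, M.V k →ₗ[ℂ] N.V k) where
  carrier := {φ | ∀ k, (φ (k + 1)).comp (M.f k) = (N.f k).comp (φ k)}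
  add_mem' := by
    intro a b ha hb k
    simp only [Pi.add_apply, LinearMap.add_comp, LinearMap.comp_add, ha k, hb k]
  zero_mem' := by
    intro k
    simp
  smul_mem' := by
    intro c a ha k
    simp only [Pi.smul_apply, LinearMap.smul_comp, LinearMap.comp_smul, ha k]

/-- The quotient of a representation by a family of subspaces stable under the
structure maps. -/
noncomputable def ARep.quot {n : ℕ} (M : ARep n) (S : ∀ k, Submodule ℂ (M.V k))
    (h : ∀ k, S k ≤ (S (k + 1)).comap (M.f k)) : ARep n where
  V k := M.V k ⧸ S k
  f k := Submodule.mapQ (S k) (S (k + 1)) (M.f k) (h k)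
  triv k hk := by
    haveI := M.triv k hk
    refine ⟨fun a b => ?_⟩
    obtain ⟨x, rfl⟩ := Submodule.Quotient.mk_surjective _ a
    obtain ⟨y, rfl⟩ := Submodule.Quotient.mk_surjective _ b
    exact congrArg _ (Subsingleton.elim x y)

/-- The quotient `M / ι(L)` of `M` by the image of a morphism `ι : L → M`. -/
noncomputable def quotByHom {n : ℕ} {L M : ARep n} (ι : ARepHom L M) : ARep n :=
  M.quot (fun k => LinearMap.range (ι.φ k)) (by
    intro k x hx
    obtain ⟨y, rfl⟩ := hx
    rw [Submodule.mem_comap]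
    exact ⟨L.f k y, LinearMap.congr_fun (ι.comm k) y⟩)

/-- The subrepresentation of `M` given by a family of subspaces stable under the
structure maps. -/
noncomputable def ARep.sub {n : ℕ} (M : ARep n) (N : ∀ i, Submodule ℂ (M.V i))
    (h : ∀ i, ∀ x ∈ N i, M.f i x ∈ N (i + 1)) : ARep n where
  V i := ↥(N i)
  f i := (M.f i).restrict (h i)
  triv i hi := by
    haveI := M.triv i hi
    exact ⟨fun a b => Subtype.ext (Subsingleton.elim _ _)⟩

/-- The subquotient representation `P/S` of `M`, for families of subspaces
`S k ≤ P k` both stable under the structure maps. -/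
noncomputable def ARep.subquot {n : ℕ} (M : ARep n) (P S : ∀ k, Submodule ℂ (M.V k))
    (hSP : ∀ k, S k ≤ P k)
    (hP : ∀ k, ∀ x ∈ P k, M.f k x ∈ P (k + 1))
    (hS : ∀ k, ∀ x ∈ S k, M.f k x ∈ S (k + 1)) : ARep n where
  V k := ↥(P k) ⧸ (S k).comap (P k).subtype
  f k := Submodule.mapQ _ _ ((M.f k).restrict (hP k)) (by
    intro x hx
    rw [Submodule.mem_comap] at hx ⊢
    exact hS k x.1 hx)
  triv k hk := by
    haveI := M.triv k hk
    haveI : Subsingleton (↥(P k)) := ⟨fun a b => Subtype.ext (Subsingleton.elim _ _)⟩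
    refine ⟨fun a b => ?_⟩
    obtain ⟨x, rfl⟩ := Submodule.Quotient.mk_surjective _ a
    obtain ⟨y, rfl⟩ := Submodule.Quotient.mk_surjective _ b
    exact congrArg _ (Subsingleton.elim x y)

/-- A `σ`-compatible `ε`-form on the underlying graded vector space of `M` making `M`
an `ε`-representation: a nondegenerate bilinear form `B` on `M^0 = ⊕_i M_i` with
`B v w = ε B w v`, with `B (M_i) (M_j) = 0` unless `i + j = n + 1` (i.e. `j = σ(i)`),
and anti-compatible with the structure maps. -/
structure EpsForm (n : ℕ) (M : ARep n) (ε : ℂ) where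
  B : (∀ i, M.V i) →ₗ[ℂ] (∀ i, M.V i) →ₗ[ℂ] ℂ
  nondeg : ∀ v, (∀ w, B v w = 0) → v = 0
  eps_symm : ∀ v w, B v w = ε * B w v
  graded : ∀ (i j : ℕ) (v : M.V i) (w : M.V j), i + j ≠ n + 1 →
    B (Pi.single i v) (Pi.single j w) = 0
  compat : ∀ i, 1 ≤ i → i + 1 ≤ n → ∀ (v : M.V i) (w : M.V (n - i)),
    B (Pi.single (i + 1) (M.f i v)) (Pi.single (n - i) w)
      + B (Pi.single i v) (Pi.single (n - i + 1) (M.f (n - i) w)) = 0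

/-- The orthogonal complement, at vertex `p`, of the image of a morphism `ι : L → M`
with respect to the form `E`. -/
noncomputable def perpAt {n : ℕ} {L M : ARep n} {ε : ℂ} (E : EpsForm n M ε)
    (ι : ARepHom L M) (p : ℕ) : Submodule ℂ (M.V p) where
  carrier := {y | ∀ (q : ℕ) (x : M.V q), x ∈ LinearMap.range (ι.φ q) →
    E.B (Pi.single p y) (Pi.single q x) = 0}
  add_mem' := by
    intro a b ha hb q x hx
    rw [Pi.single_add, map_add, LinearMap.add_apply, ha q x hx, hb q x hx, add_zero]
  zero_mem' := by
    intro q x hx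
    rw [Pi.single_zero, map_zero, LinearMap.zero_apply]
  smul_mem' := by
    intro c a ha q x hx
    rw [Pi.single_smul, map_smul, LinearMap.smul_apply, ha q x hx, smul_zero]

/-! An indecomposable `N` is an interval representation. Take `v ≠ 0` at the first nonzero
vertex `a`; the spans of the images of `v` form a subrepresentation with an `f`-stable
complement, built downwards from vertex `n`, and indecomposability kills that complement. So
every `N_k` has dimension at most one and every structure map of `N` is onto, except the one
into vertex `a`.

For `v ∈ N_p`, `w = f w' ∈ N_q` with `p + q = n + 1`, `p ≤ q`, the compatibility of the form
gives `⟨v, f w'⟩ = -⟨f v, w'⟩`, which lowers `q - p` by two. The descent ends at `q = p`, where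
`n` is odd, `ε = -1` and `⟨u, u⟩ = 0`, or at `q = p + 1`, where `n` is even, `ε = 1` and
`⟨u, f u⟩ = 0`; as `N_p` is spanned by a single `u`, both pairings vanish. -/

theorem exists_le_disjoint_le_sup {α : Type*} [Lattice α] [BoundedOrder α] [IsModularLattice α]
    [ComplementedLattice α] (W P : α) : ∃ Q ≤ W, Disjoint P Q ∧ W ≤ P ⊔ Q := by
  obtain ⟨Q, hdisj, hsup⟩ := IsModularLattice.exists_disjoint_and_sup_eq (inf_le_left : W ⊓ P ≤ W)
  have hQW : Q ≤ W := hsup ▸ le_sup_right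
  refine ⟨Q, hQW, ?_, ?_⟩
  · rw [disjoint_iff, ← inf_eq_right.mpr hQW, ← inf_assoc, inf_comm P]
    exact hdisj.eq_bot
  · exact hsup ▸ sup_le_sup_right inf_le_right Q

namespace ARep

variable {n : ℕ} (R : ARep n)

def IsIndecomposable : Prop :=
  R.Nonzero ∧ ¬ ∃ A B : ARep n, A.Nonzero ∧ B.Nonzero ∧ ARepIso R (A.dsum B)

-- For nonzero `R` this says `R ≅ U_{a,b}` for some `b ≥ a`.
structure IsIntervalFrom (a : ℕ) : Prop where
  eq_zero_of_lt : ∀ k < a, ∀ x : R.V k, x = 0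
  finrank_le_one : ∀ k, finrank ℂ (R.V k) ≤ 1
  surjective_f : ∀ k, k + 1 ≠ a → Function.Surjective (R.f k)

theorem sum_single_eq (x : ∀ i, R.V i) : ∑ i ∈ Finset.range (n + 1), Pi.single i (x i) = x := by
  funext j
  rw [Finset.sum_apply, Finset.sum_pi_single]
  split_ifs with hj
  · rfl
  · have := R.triv j (Or.inr (by simpa using hj))
    exact Subsingleton.elim _ _

theorem arepIso_dsum_sub_of_isCompl {P Q : ∀ k, Submodule ℂ (R.V k)}
    (hP : ∀ k, ∀ x ∈ P k, R.f k x ∈ P (k + 1)) (hQ : ∀ k, ∀ x ∈ Q k, R.f k x ∈ Q (k + 1))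
    (hPQ : ∀ k, IsCompl (P k) (Q k)) : ARepIso R ((R.sub P hP).dsum (R.sub Q hQ)) := by
  let e k := Submodule.prodEquivOfIsCompl (P k) (Q k) (hPQ k)
  refine ⟨⟨fun k => (e k).symm.toLinearMap, fun k => LinearMap.ext fun x => ?_⟩,
    fun k => (e k).symm.bijective⟩
  obtain ⟨z, rfl⟩ := (e k).surjective x
  apply (e (k + 1)).injective
  change e (k + 1) ((e (k + 1)).symm (R.f k (e k z))) =
    e (k + 1) (((R.sub P hP).f k).prodMap ((R.sub Q hQ).f k) ((e k).symm (e k z)))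
  rw [LinearEquiv.apply_symm_apply, LinearEquiv.symm_apply_apply]
  simp only [e, Submodule.coe_prodEquivOfIsCompl', map_add]
  rfl

variable {R} in
theorem IsIndecomposable.eq_top_of_isCompl (h : R.IsIndecomposable)
    {P Q : ∀ k, Submodule ℂ (R.V k)} (hP : ∀ k, ∀ x ∈ P k, R.f k x ∈ P (k + 1))
    (hQ : ∀ k, ∀ x ∈ Q k, R.f k x ∈ Q (k + 1))
    (hPQ : ∀ k, IsCompl (P k) (Q k)) (hPne : (R.sub P hP).Nonzero) (k : ℕ) : P k = ⊤ := by
  suffices hQ0 : Q k = ⊥ from codisjoint_bot.mp (hQ0 ▸ (hPQ k).codisjoint)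
  rw [Submodule.eq_bot_iff]
  by_contra! ⟨x, hxQ, hx⟩
  have hQne : (R.sub Q hQ).Nonzero := ⟨k, ⟨x, hxQ⟩, fun h0 => hx (congrArg Subtype.val h0)⟩
  exact h.2 ⟨_, _, hPne, hQne, R.arepIso_dsum_sub_of_isCompl hP hQ hPQ⟩

noncomputable def stableCompl (P : ∀ k, Submodule ℂ (R.V k)) (k : ℕ) : Submodule ℂ (R.V k) :=
  if n < k then ⊤
  else Classical.choose (exists_le_disjoint_le_sup ((stableCompl P (k + 1)).comap (R.f k)) (P k))
termination_by n + 1 - k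

theorem stableCompl_stable (P : ∀ k, Submodule ℂ (R.V k)) (k : ℕ) :
    ∀ x ∈ R.stableCompl P k, R.f k x ∈ R.stableCompl P (k + 1) := by
  intro x hx
  rw [stableCompl] at hx
  split_ifs at hx with hk
  · rw [stableCompl, if_pos (by omega)]
    trivial
  · exact (Classical.choose_spec (exists_le_disjoint_le_sup _ (P k))).1 hx

theorem isCompl_stableCompl {P : ∀ k, Submodule ℂ (R.V k)}
    (hP : ∀ k, P (k + 1) ≤ (P k).map (R.f k) ∨ R.f k = 0) (k : ℕ) :
    IsCompl (P k) (R.stableCompl P k) := by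
  rw [stableCompl]
  split_ifs with hk
  · have := R.triv k (Or.inr hk)
    rw [Subsingleton.elim (P k) ⊥]
    exact isCompl_bot_top
  set W := (R.stableCompl P (k + 1)).comap (R.f k)
  have hWP : W ⊔ P k = ⊤ := by
    rcases hP k with hmap | hzero
    · rw [eq_top_iff]
      rintro x -
      obtain ⟨p, hp, q, hq, hpq⟩ := Submodule.mem_sup.mp
        ((isCompl_stableCompl hP (k + 1)).sup_eq_top ▸ Submodule.mem_top : R.f k x ∈ _)
      obtain ⟨p', hp', rfl⟩ := hmap hp
      refine Submodule.mem_sup.mpr ⟨x - p', ?_, p', hp', sub_add_cancel x p'⟩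
      rwa [Submodule.mem_comap, map_sub, ← hpq, add_sub_cancel_left]
    · simp [W, hzero]
  obtain ⟨-, hdisj, hsup⟩ := Classical.choose_spec (exists_le_disjoint_le_sup W (P k))
  exact ⟨hdisj, codisjoint_iff.mpr (top_le_iff.mp (hWP ▸ sup_le hsup le_sup_left))⟩
termination_by n + 1 - k

-- `Pi.single a v` feeds `v` in at vertex `a`, so this is `f_{a,k} v` for `k ≥ a` and `0` below `a`.
noncomputable def orbit (a : ℕ) (v : R.V a) : (k : ℕ) → R.V k
  | 0 => Pi.single a v 0
  | k + 1 => R.f k (orbit a v k) + Pi.single a v (k + 1)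

theorem orbit_of_lt (a : ℕ) (v : R.V a) {k : ℕ} (hk : k < a) : R.orbit a v k = 0 := by
  induction k with
  | zero => exact Pi.single_eq_of_ne (by omega) v
  | succ k ih =>
    rw [orbit, ih (by omega), map_zero, zero_add, Pi.single_eq_of_ne (by omega)]

theorem orbit_succ (a : ℕ) (v : R.V a) {k : ℕ} (hk : k + 1 ≠ a) :
    R.orbit a v (k + 1) = R.f k (R.orbit a v k) := by
  rw [orbit, Pi.single_eq_of_ne hk, add_zero]

theorem orbit_self (a : ℕ) (v : R.V a) : R.orbit a v a = v := by
  cases a with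
  | zero => exact Pi.single_eq_same 0 v
  | succ k => rw [orbit, R.orbit_of_lt _ v (by omega), map_zero, zero_add, Pi.single_eq_same]

variable {R} in
theorem IsIndecomposable.exists_isIntervalFrom (h : R.IsIndecomposable) :
    ∃ a, R.IsIntervalFrom a := by
  classical
  let a := Nat.find h.1
  obtain ⟨v, hv⟩ : ∃ v : R.V a, v ≠ 0 := Nat.find_spec h.1
  have hlt : ∀ k < a, ∀ x : R.V k, x = 0 := fun k hk x => by
    by_contra hx
    exact Nat.find_min h.1 hk ⟨x, hx⟩
  let P k := ℂ ∙ R.orbit a v k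
  have hf_orbit : ∀ k, R.f k (R.orbit a v k) ∈ P (k + 1) := fun k => by
    by_cases hk : k + 1 = a
    · simp [R.orbit_of_lt a v (k := k) (by omega)]
    · exact R.orbit_succ a v hk ▸ Submodule.mem_span_singleton_self _
  have hPstab : ∀ k, ∀ x ∈ P k, R.f k x ∈ P (k + 1) := fun k x hx => by
    obtain ⟨c, rfl⟩ := Submodule.mem_span_singleton.mp hx
    rw [map_smul]
    exact Submodule.smul_mem _ c (hf_orbit k)
  have hPmap : ∀ k, P (k + 1) ≤ (P k).map (R.f k) ∨ R.f k = 0 := fun k => by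
    by_cases hk : k + 1 = a
    · exact Or.inr (LinearMap.ext fun x => by simp [hlt k (by omega) x])
    · exact Or.inl (by simp [P, Submodule.map_span, R.orbit_succ a v hk])
  have hPne : (R.sub P hPstab).Nonzero :=
    ⟨a, ⟨v, R.orbit_self a v ▸ Submodule.mem_span_singleton_self _⟩,
      fun h0 => hv (congrArg Subtype.val h0)⟩
  have hPtop := h.eq_top_of_isCompl hPstab (R.stableCompl_stable P)
    (R.isCompl_stableCompl hPmap) hPne
  refine ⟨a, hlt, fun k => ?_, fun k hk => ?_⟩
  · rw [← finrank_top ℂ (R.V k), ← hPtop k]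
    simpa using finrank_span_le_card {R.orbit a v k}
  · rw [← LinearMap.range_eq_top, LinearMap.range_eq_map, ← hPtop k, ← hPtop (k + 1)]
    simp [P, Submodule.map_span, R.orbit_succ a v hk]

end ARep

namespace ARep.IsIntervalFrom

variable {n : ℕ} {M : ARep n} {N : ∀ i, Submodule ℂ (M.V i)}
  {hsub : ∀ i, ∀ x ∈ N i, M.f i x ∈ N (i + 1)} {a : ℕ}

theorem eq_zero_of_mem_sub (h : (M.sub N hsub).IsIntervalFrom a) {k : ℕ} (hk : k < a)
    {w : M.V k} (hw : w ∈ N k) : w = 0 :=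
  congrArg Subtype.val (h.eq_zero_of_lt k hk ⟨w, hw⟩)

theorem exists_mem_sub_apply_eq (h : (M.sub N hsub).IsIntervalFrom a) {k : ℕ} (hk : k + 1 ≠ a)
    {w : M.V (k + 1)} (hw : w ∈ N (k + 1)) : ∃ w' ∈ N k, M.f k w' = w := by
  obtain ⟨z, hz⟩ := h.surjective_f k hk ⟨w, hw⟩
  exact ⟨(z : N k).1, (z : N k).2, congrArg Subtype.val hz⟩

theorem exists_sub_le_span_singleton (h : (M.sub N hsub).IsIntervalFrom a) (k : ℕ) :
    ∃ u : M.V k, N k ≤ ℂ ∙ u := by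
  obtain ⟨u, hu⟩ := finrank_le_one_iff.mp (h.finrank_le_one k)
  refine ⟨(u : N k).1, fun w hw => Submodule.mem_span_singleton.mpr ?_⟩
  obtain ⟨c, hc⟩ := hu ⟨w, hw⟩
  exact ⟨c, congrArg Subtype.val hc⟩

end ARep.IsIntervalFrom

namespace EpsForm

variable {n : ℕ} {M : ARep n} {ε : ℂ} (E : EpsForm n M ε)

theorem apply_self_eq_zero (hε : ε ≠ 1) (v : ∀ i, M.V i) : E.B v v = 0 := by
  have h : (1 - ε) * E.B v v = 0 := by linear_combination E.eps_symm v v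
  exact (mul_eq_zero.mp h).resolve_left (sub_ne_zero.mpr hε.symm)

theorem apply_single_f_right {p k : ℕ} (hpk : p + k = n) (hp : 0 < p) (hk : 0 < k)
    (v : M.V p) (w : M.V k) :
    E.B (Pi.single p v) (Pi.single (k + 1) (M.f k w)) =
      -E.B (Pi.single (p + 1) (M.f p v)) (Pi.single k w) := by
  obtain rfl : k = n - p := by omega
  linear_combination E.compat p hp (by omega) v w

theorem apply_single_f_self (hε : ε ≠ -1) {p : ℕ} (hp : p + p = n) (hp0 : 0 < p) (v : M.V p) :
    E.B (Pi.single p v) (Pi.single (p + 1) (M.f p v)) = 0 := by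
  have h : (1 + ε) * E.B (Pi.single p v) (Pi.single (p + 1) (M.f p v)) = 0 := by
    linear_combination E.apply_single_f_right hp hp0 hp0 v v -
      E.eps_symm (Pi.single (p + 1) (M.f p v)) (Pi.single p v)
  refine (mul_eq_zero.mp h).resolve_left fun h1 => hε ?_
  linear_combination h1

theorem apply_eq_zero_of_forall_single (N : ∀ i, Submodule ℂ (M.V i))
    (h : ∀ p q, p + q = n + 1 → p ≤ q → ∀ v ∈ N p, ∀ w ∈ N q,
      E.B (Pi.single p v) (Pi.single q w) = 0)
    {x y : ∀ i, M.V i} (hx : ∀ i, x i ∈ N i) (hy : ∀ i, y i ∈ N i) : E.B x y = 0 := by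
  have hsingle : ∀ i j, E.B (Pi.single i (x i)) (Pi.single j (y j)) = 0 := fun i j => by
    by_cases hij : i + j = n + 1
    · rcases le_total i j with hle | hle
      · exact h i j hij hle _ (hx i) _ (hy j)
      · rw [E.eps_symm, h j i (by omega) hle _ (hy j) _ (hx i), mul_zero]
    · exact E.graded i j _ _ hij
  rw [← M.sum_single_eq x, ← M.sum_single_eq y]
  simp only [map_sum, LinearMap.sum_apply, hsingle, Finset.sum_const_zero]

theorem apply_single_eq_zero_of_isIntervalFrom (hsplit : (Odd n ∧ ε = -1) ∨ (Even n ∧ ε = 1))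
    {N : ∀ i, Submodule ℂ (M.V i)} {hsub : ∀ i, ∀ x ∈ N i, M.f i x ∈ N (i + 1)} {a : ℕ}
    (hN : (M.sub N hsub).IsIntervalFrom a) {p q : ℕ} (hpq : p + q = n + 1) (hle : p ≤ q)
    {v : M.V p} (hv : v ∈ N p) {w : M.V q} (hw : w ∈ N q) :
    E.B (Pi.single p v) (Pi.single q w) = 0 := by
  rcases Nat.eq_zero_or_pos p with rfl | hp
  · have := M.triv 0 (Or.inl rfl)
    simp [Subsingleton.elim v 0]
  obtain rfl | rfl | hq : p = q ∨ q = p + 1 ∨ p + 2 ≤ q := by omega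
  · have hε : ε ≠ 1 := by
      rcases hsplit with ⟨-, rfl⟩ | ⟨⟨r, hr⟩, -⟩
      · norm_num
      · omega
    obtain ⟨u, hu⟩ := hN.exists_sub_le_span_singleton p
    obtain ⟨c, rfl⟩ := Submodule.mem_span_singleton.mp (hu hv)
    obtain ⟨d, rfl⟩ := Submodule.mem_span_singleton.mp (hu hw)
    simp [Pi.single_smul, E.apply_self_eq_zero hε]
  · have hε : ε ≠ -1 := by
      rcases hsplit with ⟨⟨r, hr⟩, -⟩ | ⟨-, rfl⟩
      · omega
      · norm_num
    by_cases hpa : p + 1 = a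
    · simp [hN.eq_zero_of_mem_sub (by omega) hv]
    obtain ⟨w', hw', rfl⟩ := hN.exists_mem_sub_apply_eq hpa hw
    obtain ⟨u, hu⟩ := hN.exists_sub_le_span_singleton p
    obtain ⟨c, rfl⟩ := Submodule.mem_span_singleton.mp (hu hv)
    obtain ⟨d, rfl⟩ := Submodule.mem_span_singleton.mp (hu hw')
    simp [Pi.single_smul, E.apply_single_f_self hε (by omega) hp]
  · obtain ⟨k, rfl⟩ : ∃ k, q = k + 1 := ⟨q - 1, by omega⟩
    by_cases hka : k + 1 = a
    · simp [hN.eq_zero_of_mem_sub (by omega) hv]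
    obtain ⟨w', hw', rfl⟩ := hN.exists_mem_sub_apply_eq hka hw
    rw [E.apply_single_f_right (by omega) hp (by omega),
      apply_single_eq_zero_of_isIntervalFrom hsplit hN (by omega) (by omega) (hsub p v hv) hw',
      neg_zero]
termination_by q - p

end EpsForm

theorem split_type_indecomposable_sub_isotropic (n : ℕ) (ε : ℂ)
    (hsplit : (Odd n ∧ ε = -1) ∨ (Even n ∧ ε = 1))
    (M : ARep n) (E : EpsForm n M ε)
    (N : ∀ i, Submodule ℂ (M.V i)) (hsub : ∀ i, ∀ x ∈ N i, M.f i x ∈ N (i + 1))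
    (hne : (M.sub N hsub).Nonzero)
    (hind : ¬ ∃ A B : ARep n, A.Nonzero ∧ B.Nonzero ∧ ARepIso (M.sub N hsub) (A.dsum B)) :
    ∀ x y : (∀ i, M.V i), (∀ i, x i ∈ N i) → (∀ i, y i ∈ N i) → E.B x y = 0 := by
  intro x y hx hy
  obtain ⟨a, ha⟩ := ARep.IsIndecomposable.exists_isIntervalFrom (R := M.sub N hsub) ⟨hne, hind⟩
  exact E.apply_eq_zero_of_forall_single N
    (fun _ _ hpq hle _ hv _ hw => E.apply_single_eq_zero_of_isIntervalFrom hsplit ha hpq hle hv hw)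
    hx hy
end

section
/- The map φ sending (V_1,…,V_n) to (V_1,…,V_n, V_{n−1}^⊥,…,V_1^⊥), where X^⊥ := {u ∈ V : ω_V(x,u) = 0 for all x ∈ X}, is a well-defined bijection from SpF^𝐢_{2n} onto the set {(V_1,…,V_{2n−1}) ∈ F^{𝐢′}_{2n} : V_{2n−k}^⊥ = V_k for all 1 ≤ k ≤ 2n−1}, with inverse given by (V_1,…,V_{2n−1}) ↦ (V_1,…,V_n). -/
open Module

/-- `V = ℂ^{2n}`, with the standard basis `v_1, …, v_{2n}` given (0-indexed) by the
coordinate functions. -/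
abbrev Vs (n : ℕ) := Fin (2 * n) → ℂ

open scoped Classical in
/-- The projection `pr_K` killing the coordinates in `K` (0-indexed: the basis vector
`v_{a+1}` corresponds to the coordinate `a`). -/
noncomputable def prK (N : ℕ) (K : Set (Fin N)) : (Fin N → ℂ) →ₗ[ℂ] (Fin N → ℂ) where
  toFun x := fun a => if a ∈ K then 0 else x a
  map_add' x y := by funext a; by_cases h : a ∈ K <;> simp [h]
  map_smul' c x := by funext a; by_cases h : a ∈ K <;> simp [h]

/-- The symplectic form `ω_V` on `V = ℂ^{2n}`: `ω_V(v_a, v_b) = 0` unless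
`a + b = 2n + 1` (1-indexed) and `ω_V(v_i, v_{2n+1-i}) = 1` for `1 ≤ i ≤ n`. -/
noncomputable def omegaV (n : ℕ) : LinearMap.BilinForm ℂ (Vs n) :=
  LinearMap.mk₂ ℂ
    (fun x y => ∑ a : Fin (2 * n), (if (a : ℕ) < n then (1 : ℂ) else -1) * (x a * y a.rev))
    (fun x x' y => by simp [add_mul, mul_add, Finset.sum_add_distrib])
    (fun c x y => by simp [Finset.mul_sum, mul_assoc, mul_left_comm, mul_comm])
    (fun x y y' => by simp [mul_add, Finset.sum_add_distrib])
    (fun c x y => by simp [Finset.mul_sum, mul_assoc, mul_left_comm, mul_comm])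

/-- The structure maps of linear degenerations: `f_k = pr_{{k+1}}` (killing the basis
vector `v_{k+1}`, which is the 0-indexed coordinate `k`) if `k ∈ J`, the identity
otherwise. -/
noncomputable def fdeg (n : ℕ) (J : Finset ℕ) (k : ℕ) : Vs n →ₗ[ℂ] Vs n :=
  if k ∈ J then prK (2 * n) {a | (a : ℕ) = k} else LinearMap.id

/-- `𝐢′ = 𝐢 ∪ {2n-1-i : i ∈ 𝐢}`. -/
def Iprime (n : ℕ) (I : Finset ℕ) : Finset ℕ := I ∪ I.image (fun i => 2 * n - 1 - i)

/-- The linear degenerate symplectic flag variety `SpF^𝐢_{2n}`, as a set of tuples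
`(V_1, …, V_n)` of subspaces of `V = ℂ^{2n}` (the tuple entry of index `k : Fin n`
is `V_{k+1}`). -/
noncomputable def SpF (n : ℕ) (I : Finset ℕ) : Set (Fin n → Submodule ℂ (Vs n)) :=
  {Vt | (∀ k : Fin n, finrank ℂ ↥(Vt k) = k.1 + 1) ∧
    (∀ k : ℕ, ∀ hk : k + 1 < n,
      (Vt ⟨k, by omega⟩).map (fdeg n I (k + 1)) ≤ Vt ⟨k + 1, hk⟩) ∧
    (∀ h : n - 1 < n, Vt ⟨n - 1, h⟩ = (omegaV n).orthogonal (Vt ⟨n - 1, h⟩))}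

/-- The linear degenerate flag variety `F^{J}_{2n}` for `J ⊆ {1, …, 2n-1}`, as a set
of tuples `(V_1, …, V_{2n-1})` of subspaces of `V = ℂ^{2n}`. -/
noncomputable def Fpr (n : ℕ) (J : Finset ℕ) : Set (Fin (2 * n - 1) → Submodule ℂ (Vs n)) :=
  {Vt | (∀ k : Fin (2 * n - 1), finrank ℂ ↥(Vt k) = k.1 + 1) ∧
    (∀ k : ℕ, ∀ hk : k + 1 < 2 * n - 1,
      (Vt ⟨k, by omega⟩).map (fdeg n J (k + 1)) ≤ Vt ⟨k + 1, hk⟩)}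
/-- The map `(V_1,…,V_n) ↦ (V_1,…,V_n,V_{n-1}^⊥,…,V_1^⊥)`, where the orthogonal
complements are taken with respect to `ω_V`. -/
noncomputable def phiMap (n : ℕ) (hn : 2 ≤ n) :
    (Fin n → Submodule ℂ (Vs n)) → (Fin (2 * n - 1) → Submodule ℂ (Vs n)) :=
  fun Vt k =>
    if h : k.1 < n then Vt ⟨k.1, h⟩
    else (omegaV n).orthogonal (Vt ⟨2 * n - 2 - k.1, by omega⟩)

/-- The truncation map `(V_1,…,V_{2n-1}) ↦ (V_1,…,V_n)`. -/
def psiMap (n : ℕ) (hn : 2 ≤ n) :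
    (Fin (2 * n - 1) → Submodule ℂ (Vs n)) → (Fin n → Submodule ℂ (Vs n)) :=
  fun Wt k => Wt ⟨k.1, by have := k.isLt; omega⟩

/-- The set of tuples `(V_1,…,V_{2n-1})` with `V_{2n-k}^⊥ = V_k` for all
`1 ≤ k ≤ 2n-1`. -/
noncomputable def symTuples (n : ℕ) : Set (Fin (2 * n - 1) → Submodule ℂ (Vs n)) :=
  {Wt | ∀ k : ℕ, 1 ≤ k → k ≤ 2 * n - 1 →
    ∀ h1 : 2 * n - k - 1 < 2 * n - 1, ∀ h2 : k - 1 < 2 * n - 1,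
      (omegaV n).orthogonal (Wt ⟨2 * n - k - 1, h1⟩) = Wt ⟨k - 1, h2⟩}

/-! The second half of `φ(V)` consists of the orthogonal complements of the first half, and
the structure maps match up under `ω_V`: killing `v_c` is adjoint to killing `v_{2n+1-c}`,
which is exactly how `𝐢′` is built from `𝐢`. Orthogonal complements therefore turn the flag
condition `f_j(V_j) ⊆ V_{j+1}` into `f′_{2n-1-j}(V_{j+1}^⊥) ⊆ V_j^⊥`, and the Lagrangian
condition `V_n = V_n^⊥` glues the two halves in the middle. The truncation is inverse to `φ`
because `ω_V` is nondegenerate, so that `X^⊥⊥ = X`. -/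

namespace LinearMap.BilinForm

variable {R M : Type*} [CommSemiring R] [AddCommMonoid M] [Module R M]

theorem map_orthogonal_le_orthogonal {B : LinearMap.BilinForm R M} {f g : M →ₗ[R] M}
    (hfg : IsAdjointPair B B g f) {U W : Submodule R M} (h : U.map g ≤ W) :
    (B.orthogonal W).map f ≤ B.orthogonal U := by
  rintro _ ⟨u, hu, rfl⟩ x hx
  rw [← hfg]
  exact hu _ (h ⟨x, hx, rfl⟩)

end LinearMap.BilinForm

open LinearMap LinearMap.BilinForm

open scoped Classical in
theorem prK_apply (N : ℕ) (K : Set (Fin N)) (x : Fin N → ℂ) (a : Fin N) :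
    prK N K x a = if a ∈ K then 0 else x a :=
  rfl

section Form

variable (n : ℕ)

theorem omegaV_apply (x y : Vs n) :
    omegaV n x y = ∑ a : Fin (2 * n), (if (a : ℕ) < n then (1 : ℂ) else -1) * (x a * y a.rev) :=
  rfl

theorem omegaV_swap (x y : Vs n) : omegaV n y x = -omegaV n x y := by
  rw [omegaV_apply, omegaV_apply, ← Finset.sum_neg_distrib]
  refine Fintype.sum_equiv Fin.revPerm _ _ fun a => ?_
  have hrev : (a.rev : ℕ) = 2 * n - (a + 1) := Fin.val_rev a
  have := a.isLt
  simp only [Fin.revPerm_apply, Fin.rev_rev, hrev]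
  split_ifs <;> first | (exfalso; omega) | ring

theorem omegaV_isRefl : (omegaV n).IsRefl := fun x y h => by
  rw [omegaV_swap, h, neg_zero]

theorem omegaV_single_right (x : Vs n) (a : Fin (2 * n)) :
    omegaV n x (Pi.single a 1) = (if (a.rev : ℕ) < n then 1 else -1) * x a.rev := by
  rw [omegaV_apply, Finset.sum_eq_single a.rev]
  · simp
  · intro b _ hb
    rw [Pi.single_eq_of_ne (by rintro rfl; simp at hb), mul_zero, mul_zero]
  · simp

theorem omegaV_nondegenerate : (omegaV n).Nondegenerate := by
  refine .ofSeparatingLeft fun x hx => funext fun a => ?_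
  have h := hx (Pi.single a.rev 1)
  rw [omegaV_single_right, Fin.rev_rev] at h
  split_ifs at h <;> simpa using h

theorem finrank_omegaV_orthogonal (W : Submodule ℂ (Vs n)) :
    finrank ℂ ((omegaV n).orthogonal W) = 2 * n - finrank ℂ W := by
  rw [finrank_orthogonal (omegaV_nondegenerate n), Module.finrank_fin_fun]

theorem omegaV_orthogonal_orthogonal (W : Submodule ℂ (Vs n)) :
    (omegaV n).orthogonal ((omegaV n).orthogonal W) = W :=
  orthogonal_orthogonal (omegaV_nondegenerate n) (omegaV_isRefl n) W

theorem prK_isAdjointPair (K : Set (Fin (2 * n))) :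
    IsAdjointPair (omegaV n) (omegaV n) (prK (2 * n) K) (prK (2 * n) (Fin.rev ⁻¹' K)) := by
  intro x y
  simp only [omegaV_apply, prK_apply, Set.mem_preimage, Fin.rev_rev]
  refine Finset.sum_congr rfl fun a _ => ?_
  split_ifs <;> simp_all

theorem fdeg_isAdjointPair {J J' : Finset ℕ} {c c' : ℕ} (hcc' : c + c' = 2 * n - 1)
    (hJ : c ∈ J ↔ c' ∈ J') :
    IsAdjointPair (omegaV n) (omegaV n) (fdeg n J c) (fdeg n J' c') := by
  by_cases hc : c ∈ J
  · have hK : {a : Fin (2 * n) | (a : ℕ) = c'} = Fin.rev ⁻¹' {a | (a : ℕ) = c} := by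
      ext a
      simp only [Set.mem_ofPred_eq, Set.mem_preimage, Fin.val_rev]
      omega
    simp only [fdeg, if_pos hc, if_pos (hJ.mp hc), hK]
    exact prK_isAdjointPair n _
  · simp only [fdeg, if_neg hc, if_neg (mt hJ.mpr hc)]
    exact fun _ _ => rfl

end Form

theorem fdeg_congr (n : ℕ) {J J' : Finset ℕ} {k : ℕ} (h : k ∈ J ↔ k ∈ J') :
    fdeg n J k = fdeg n J' k := by
  simp only [fdeg, h]

section Iprime

variable {n : ℕ} {I : Finset ℕ} (hI : ∀ i ∈ I, 1 ≤ i ∧ i ≤ n - 1)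
include hI

theorem mem_Iprime_of_lt {k : ℕ} (hk : k < n) : k ∈ Iprime n I ↔ k ∈ I := by
  simp only [Iprime, Finset.mem_union, Finset.mem_image, or_iff_left_iff_imp]
  rintro ⟨i, hi, rfl⟩
  have := hI i hi
  omega

theorem mem_Iprime_of_add_eq {j k : ℕ} (hj : j < n) (hjk : j + k = 2 * n - 1) :
    k ∈ Iprime n I ↔ j ∈ I := by
  simp only [Iprime, Finset.mem_union, Finset.mem_image]
  constructor
  · rintro (hk | ⟨i, hi, rfl⟩)
    · have := hI k hk
      omega
    · have := hI i hi
      obtain rfl : j = i := by omega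
      exact hi
  · exact fun hjI => .inr ⟨j, hjI, by omega⟩

end Iprime

section Phi

variable {n : ℕ} (hn : 2 ≤ n) {Vt : Fin n → Submodule ℂ (Vs n)}

theorem phiMap_of_lt {k : ℕ} (hk : k < 2 * n - 1) (h : k < n) :
    phiMap n hn Vt ⟨k, hk⟩ = Vt ⟨k, h⟩ :=
  dif_pos h

variable (hlag : ∀ h : n - 1 < n, Vt ⟨n - 1, h⟩ = (omegaV n).orthogonal (Vt ⟨n - 1, h⟩))
include hlag

theorem phiMap_of_add_eq {k j : ℕ} (hk : k < 2 * n - 1) (hj : j < n)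
    (hkj : k + j = 2 * n - 2) :
    phiMap n hn Vt ⟨k, hk⟩ = (omegaV n).orthogonal (Vt ⟨j, hj⟩) := by
  by_cases h : k < n
  · obtain ⟨rfl, rfl⟩ : k = n - 1 ∧ j = n - 1 := by omega
    exact (phiMap_of_lt hn hk h).trans (hlag hj)
  · obtain rfl : j = 2 * n - 2 - k := by omega
    exact dif_neg h

theorem phiMap_eq_orthogonal {k k' : ℕ} (hk : k < 2 * n - 1) (hk' : k' < 2 * n - 1)
    (hkk' : k + k' = 2 * n - 2) :
    phiMap n hn Vt ⟨k, hk⟩ = (omegaV n).orthogonal (phiMap n hn Vt ⟨k', hk'⟩) := by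
  by_cases h : n - 1 ≤ k
  · rw [phiMap_of_add_eq hn hlag hk (by omega) hkk', phiMap_of_lt hn hk' (by omega)]
  · rw [phiMap_of_add_eq hn hlag hk' (j := k) (by omega) (by omega), omegaV_orthogonal_orthogonal,
      phiMap_of_lt hn hk (by omega)]

end Phi

theorem orthogonal_eq_of_mem_symTuples {n : ℕ} {Wt : Fin (2 * n - 1) → Submodule ℂ (Vs n)}
    (hW : Wt ∈ symTuples n) {k k' : ℕ} (hk : k < 2 * n - 1) (hk' : k' < 2 * n - 1)
    (hkk' : k + k' = 2 * n - 2) :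
    (omegaV n).orthogonal (Wt ⟨k', hk'⟩) = Wt ⟨k, hk⟩ := by
  obtain rfl : k' = 2 * n - (k + 1) - 1 := by omega
  exact hW (k + 1) (by omega) (by omega) hk' hk

section Maps

variable {n : ℕ} (hn : 2 ≤ n) {I : Finset ℕ} (hI : ∀ i ∈ I, 1 ≤ i ∧ i ≤ n - 1)
include hI

theorem phiMap_mem {Vt : Fin n → Submodule ℂ (Vs n)} (hV : Vt ∈ SpF n I) :
    phiMap n hn Vt ∈ Fpr n (Iprime n I) ∩ symTuples n := by
  obtain ⟨hdim, hflag, hlag⟩ := hV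
  refine ⟨⟨fun ⟨k, hk⟩ => ?_, fun k hk => ?_⟩, ?_⟩
  · by_cases h : k < n
    · rw [phiMap_of_lt hn hk h, hdim]
    · rw [phiMap_of_add_eq hn hlag hk (j := 2 * n - 2 - k) (by omega) (by omega),
        finrank_omegaV_orthogonal, hdim]
      dsimp only
      omega
  · by_cases h : k + 1 < n
    · rw [phiMap_of_lt hn _ (by omega), phiMap_of_lt hn hk h,
        fdeg_congr n (mem_Iprime_of_lt hI h)]
      exact hflag k h
    · have hj : 2 * n - 3 - k + 1 < n := by omega
      rw [phiMap_of_add_eq hn hlag _ hj (by omega),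
        phiMap_of_add_eq hn hlag hk (j := 2 * n - 3 - k) (by omega) (by omega)]
      refine map_orthogonal_le_orthogonal ?_ (hflag _ hj)
      exact fdeg_isAdjointPair n (by omega) (mem_Iprime_of_add_eq hI hj (by omega)).symm
  · intro k _ _ h₁ h₂
    exact (phiMap_eq_orthogonal hn hlag h₂ h₁ (by omega)).symm

theorem psiMap_mem {Wt : Fin (2 * n - 1) → Submodule ℂ (Vs n)}
    (hW : Wt ∈ Fpr n (Iprime n I) ∩ symTuples n) : psiMap n hn Wt ∈ SpF n I := by
  obtain ⟨⟨hdim, hflag⟩, hsym⟩ := hW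
  refine ⟨fun k => hdim _, fun k hk => ?_, fun h => ?_⟩
  · rw [← fdeg_congr n (mem_Iprime_of_lt hI hk)]
    exact hflag k (by omega)
  · exact (orthogonal_eq_of_mem_symTuples hsym (k := n - 1) (k' := n - 1) _ _ (by omega)).symm

end Maps

theorem psiMap_phiMap {n : ℕ} (hn : 2 ≤ n) (Vt : Fin n → Submodule ℂ (Vs n)) :
    psiMap n hn (phiMap n hn Vt) = Vt :=
  funext fun k => dif_pos k.isLt

theorem phiMap_psiMap {n : ℕ} (hn : 2 ≤ n) {Wt : Fin (2 * n - 1) → Submodule ℂ (Vs n)}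
    (hW : Wt ∈ symTuples n) : phiMap n hn (psiMap n hn Wt) = Wt := by
  funext ⟨k, hk⟩
  by_cases h : k < n
  · exact dif_pos h
  · exact (dif_neg h).trans
      (orthogonal_eq_of_mem_symTuples hW hk (k' := 2 * n - 2 - k) _ (by omega))

theorem sympl_flag_bijection (n : ℕ) (hn : 2 ≤ n) (I : Finset ℕ)
    (hI : ∀ i ∈ I, 1 ≤ i ∧ i ≤ n - 1) :
    Set.BijOn (phiMap n hn) (SpF n I) (Fpr n (Iprime n I) ∩ symTuples n) ∧
      Set.InvOn (psiMap n hn) (phiMap n hn) (SpF n I)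
        (Fpr n (Iprime n I) ∩ symTuples n) := by
  have hinv : Set.InvOn (psiMap n hn) (phiMap n hn) (SpF n I)
      (Fpr n (Iprime n I) ∩ symTuples n) :=
    ⟨fun Vt _ => psiMap_phiMap hn Vt, fun _ hW => phiMap_psiMap hn hW.2⟩
  exact ⟨hinv.bijOn (fun _ => phiMap_mem hn hI) (fun _ => psiMap_mem hn hI), hinv⟩
end

section
/- The map μ sending (V_1,…,V_{2n−1}) to (π_{h_1}^{−1}(V_1), …, π_{h_{2n−1}}^{−1}(V_{2n−1})), where each preimage π_{h_k}^{−1}(V_k) ⊆ U_{2n+h_k} is regarded as a subspace of W, is a bijection from F^{𝐢′}_{2n} onto the set of tuples (W_1,…,W_{2n−1}) of subspaces of W such that: dim W_k = ℓ_k for all 1 ≤ k ≤ 2n−1; W_k ⊆ W_{k+1} for 1 ≤ k ≤ 2n−2; and span{e_{j_p+1} : 1 ≤ p ≤ h_k} ⊆ W_k ⊆ span(e_1,…,e_{2n+h_k}) for all 1 ≤ k ≤ 2n−1. -/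
open Module

/-- `W = ℂ^{2n+2t}` with standard basis `e_1, …, e_{2n+2t}` (0-indexed coordinates). -/
abbrev Ws (n t : ℕ) := Fin (2 * n + 2 * t) → ℂ

open scoped Classical in
/-- The index (0-based) of the basis vector of `W` whose image under `π_s` is
`v_{b+1}`: it is `e_{2n+p}` if `j p = b` for some `1 ≤ p ≤ s` (with `p ≤ 2t`), and
`e_{b+1}` otherwise. -/
noncomputable def cIdx (n t : ℕ) (j : ℕ → ℕ) (s : ℕ) (b : Fin (2 * n)) :
    Fin (2 * n + 2 * t) :=
  if h : ∃ p, 1 ≤ p ∧ p ≤ s ∧ p ≤ 2 * t ∧ j p = (b : ℕ) then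
    ⟨2 * n + Classical.choose h - 1, by have := Classical.choose_spec h; omega⟩
  else ⟨b.1, by have := b.isLt; omega⟩

/-- The map `π_s : W → V`, given on the basis by `π_s(e_a) = v_a` for
`a ∈ {1,…,2n} ∖ {j_1+1,…,j_s+1}`, `π_s(e_{j_p+1}) = 0` for `1 ≤ p ≤ s`,
`π_s(e_{2n+p}) = v_{j_p+1}` for `1 ≤ p ≤ s`, and `π_s(e_a) = 0` for `a > 2n+s`
(so that its restriction to `U_{2n+s} = span(e_1,…,e_{2n+s})` is the map `π_s` of the
statement). -/
noncomputable def piW (n t : ℕ) (j : ℕ → ℕ) (s : ℕ) : Ws n t →ₗ[ℂ] Vs n where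
  toFun x := fun b => x (cIdx n t j s b)
  map_add' x y := rfl
  map_smul' c x := rfl

/-- The subspace `U_{2n+s} = span(e_1, …, e_{2n+s})` of `W`. -/
noncomputable def UspanW (n t s : ℕ) : Submodule ℂ (Ws n t) :=
  ⨅ (a : Fin (2 * n + 2 * t)) (_ : 2 * n + s ≤ (a : ℕ)),
    LinearMap.ker (LinearMap.proj (R := ℂ) (φ := fun _ : Fin (2 * n + 2 * t) => ℂ) a)

/-- The preimage `π_s^{-1}(V') ⊆ U_{2n+s}`, regarded as a subspace of `W`. -/
noncomputable def PreW (n t : ℕ) (j : ℕ → ℕ) (s : ℕ) (V' : Submodule ℂ (Vs n)) :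
    Submodule ℂ (Ws n t) :=
  UspanW n t s ⊓ Submodule.comap (piW n t j s) V'

/-! The `κ`-th element of `[1, 2n+2t] ∖ {j_p + p}` is `ℓ_κ = κ + h_κ` with
`h_κ = #{p : j_p < κ}`, so `h` jumps by one exactly at `κ = j_p ∈ 𝐢′`, and there
`π_{h_κ+1} = pr_{{j_p+1}} ∘ π_{h_κ}` on `U_{2n+h_κ}`; hence `f′_κ ∘ π_{h_κ} = π_{h_{κ+1}}` on
`U_{2n+h_κ}` for every `κ`. Each `π_s` maps `U_{2n+s}` onto `V` with kernel
`span{e_{j_p+1} : p ≤ s}` of dimension `s`, so `V' ↦ π_s⁻¹(V')` is a bijection onto the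
subspaces squeezed between that kernel and `U_{2n+s}`, raising dimensions by `s`; the
compatibility with the `f′_κ` makes these levelwise bijections one of flags. -/

section Interleaving

open Finset

variable {g : ℕ → ℕ} {N : ℕ}

theorem filter_Icc_le_apply (hg : StrictMonoOn g (Set.Icc 1 N)) {p : ℕ}
    (hp : p ∈ Set.Icc 1 N) : {q ∈ Icc 1 N | g q ≤ g p} = Icc 1 p := by
  ext q
  simp only [mem_filter, mem_Icc]
  constructor
  · rintro ⟨hq, hle⟩
    exact ⟨hq.1, (hg.le_iff_le hq hp).1 hle⟩
  · rintro ⟨hq1, hqp⟩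
    have hq : q ∈ Set.Icc 1 N := ⟨hq1, hqp.trans hp.2⟩
    exact ⟨hq, (hg.le_iff_le hq hp).2 hqp⟩

theorem filter_Icc_lt_apply (hg : StrictMonoOn g (Set.Icc 1 N)) {p : ℕ}
    (hp : p ∈ Set.Icc 1 N) : {q ∈ Icc 1 N | g q < g p} = Icc 1 (p - 1) := by
  ext q
  simp only [mem_filter, mem_Icc]
  constructor
  · rintro ⟨hq, hlt⟩
    have := (hg.lt_iff_lt hq hp).1 hlt
    omega
  · rintro ⟨hq1, hqp⟩
    have hq : q ∈ Set.Icc 1 N := ⟨hq1, by have := hp.2; omega⟩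
    exact ⟨hq, (hg.lt_iff_lt hq hp).2 (by omega)⟩

theorem card_filter_le_apply (hg : StrictMonoOn g (Set.Icc 1 N)) {p : ℕ}
    (hp : p ∈ Set.Icc 1 N) : #{q ∈ Icc 1 N | g q ≤ g p} = p := by
  rw [filter_Icc_le_apply hg hp, Nat.card_Icc, Nat.add_sub_cancel]

theorem le_iff_le_card_filter_le (hg : StrictMonoOn g (Set.Icc 1 N)) {p : ℕ}
    (hp : p ∈ Set.Icc 1 N) (X : ℕ) : g p ≤ X ↔ p ≤ #{q ∈ Icc 1 N | g q ≤ X} := by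
  constructor
  · intro h
    calc p = #{q ∈ Icc 1 N | g q ≤ g p} := (card_filter_le_apply hg hp).symm
      _ ≤ _ := card_le_card (monotone_filter_right _ fun q _ hq => hq.trans h)
  · intro h
    by_contra! hX
    have := card_le_card
      (monotone_filter_right (Icc 1 N) fun q _ (hq : g q ≤ X) => hq.trans_lt hX)
    rw [filter_Icc_lt_apply hg hp, Nat.card_Icc] at this
    have := hp.1
    omega

theorem card_filter_le_add_card_filter_le {l m : ℕ → ℕ} {T M : ℕ}
    (hl : Set.InjOn l (Set.Icc 1 N)) (hm : Set.InjOn m (Set.Icc 1 T))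
    (hm1 : ∀ p ∈ Set.Icc 1 T, 1 ≤ m p)
    (hlm : ∀ y, (∃ k, 1 ≤ k ∧ k ≤ N ∧ l k = y) ↔
      (1 ≤ y ∧ y ≤ M ∧ ¬∃ p, 1 ≤ p ∧ p ≤ T ∧ y = m p))
    {x : ℕ} (hx : x ≤ M) :
    #{k ∈ Icc 1 N | l k ≤ x} + #{p ∈ Icc 1 T | m p ≤ x} = x := by
  have hl1 : ∀ k ∈ Set.Icc 1 N, 1 ≤ l k := fun k hk => ((hlm _).1 ⟨k, hk.1, hk.2, rfl⟩).1
  have hdisj : Disjoint ({k ∈ Icc 1 N | l k ≤ x}.image l) ({p ∈ Icc 1 T | m p ≤ x}.image m) := by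
    simp only [disjoint_left, mem_image, mem_filter, mem_Icc]
    rintro _ ⟨k, ⟨hk, -⟩, rfl⟩ ⟨p, ⟨hp, -⟩, hpk⟩
    exact ((hlm _).1 ⟨k, hk.1, hk.2, rfl⟩).2.2 ⟨p, hp.1, hp.2, hpk.symm⟩
  have hunion : {k ∈ Icc 1 N | l k ≤ x}.image l ∪ {p ∈ Icc 1 T | m p ≤ x}.image m =
      Icc 1 x := by
    ext y
    simp only [mem_union, mem_image, mem_filter, mem_Icc]
    constructor
    · rintro (⟨k, ⟨hk, hkx⟩, rfl⟩ | ⟨p, ⟨hp, hpx⟩, rfl⟩)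
      · exact ⟨hl1 k hk, hkx⟩
      · exact ⟨hm1 p hp, hpx⟩
    · rintro ⟨hy1, hyx⟩
      by_cases hy : ∃ p, 1 ≤ p ∧ p ≤ T ∧ y = m p
      · obtain ⟨p, hp1, hpT, rfl⟩ := hy
        exact Or.inr ⟨p, ⟨⟨hp1, hpT⟩, hyx⟩, rfl⟩
      · obtain ⟨k, hk1, hkN, rfl⟩ := (hlm y).2 ⟨hy1, hyx.trans hx, hy⟩
        exact Or.inl ⟨k, ⟨⟨hk1, hkN⟩, hyx⟩, rfl⟩
  rw [← card_image_of_injOn (hl.mono fun k hk => (mem_filter.1 hk).1 |> mem_Icc.1),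
    ← card_image_of_injOn (hm.mono fun p hp => (mem_filter.1 hp).1 |> mem_Icc.1),
    ← card_union_of_disjoint hdisj, hunion, Nat.card_Icc, Nat.add_sub_cancel]

end Interleaving

open Finset in
/-- For `j` enumerating `𝐢′`, `countBelow j (2 * t) k` is the shift `h_k = ℓ_k - k`. -/
def countBelow (j : ℕ → ℕ) (T κ : ℕ) : ℕ := #{p ∈ Icc 1 T | j p < κ}

section CountBelow

open Finset

variable {j : ℕ → ℕ} {T : ℕ}

theorem countBelow_le (κ : ℕ) : countBelow j T κ ≤ T :=
  (card_filter_le _ _).trans (by simp)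

theorem countBelow_mono : Monotone (countBelow j T) := fun _ _ hκ =>
  card_le_card (monotone_filter_right _ fun _ _ hp => lt_of_lt_of_le hp hκ)

theorem countBelow_apply (hj : StrictMonoOn j (Set.Icc 1 T)) {p : ℕ} (hp : p ∈ Set.Icc 1 T) :
    countBelow j T (j p) = p - 1 := by
  rw [countBelow, filter_Icc_lt_apply hj hp, Nat.card_Icc]
  omega

theorem countBelow_apply_add_one (hj : StrictMonoOn j (Set.Icc 1 T)) {p : ℕ}
    (hp : p ∈ Set.Icc 1 T) : countBelow j T (j p + 1) = p := by
  simp only [countBelow, Nat.lt_add_one_iff]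
  exact card_filter_le_apply hj hp

theorem countBelow_add_one_of_forall_ne {κ : ℕ} (h : ∀ p ∈ Set.Icc 1 T, j p ≠ κ) :
    countBelow j T (κ + 1) = countBelow j T κ := by
  refine congrArg card (filter_congr fun p hp => ?_)
  have := h p (by simpa using hp)
  omega

theorem eq_add_countBelow (hj : StrictMonoOn j (Set.Icc 1 T)) {N : ℕ}
    (hjN : ∀ p ∈ Set.Icc 1 T, j p < N) {l : ℕ → ℕ} (hl : StrictMonoOn l (Set.Icc 1 N))
    (hlim : ∀ x, (∃ k, 1 ≤ k ∧ k ≤ N ∧ l k = x) ↔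
      (1 ≤ x ∧ x ≤ N + T ∧ ¬∃ p, 1 ≤ p ∧ p ≤ T ∧ x = j p + p))
    {κ : ℕ} (hκ : κ ∈ Set.Icc 1 N) : l κ = κ + countBelow j T κ := by
  have hm : StrictMonoOn (fun p => j p + p) (Set.Icc 1 T) := fun p hp q hq hpq => by
    have := hj hp hq hpq
    dsimp only
    omega
  have hcount := fun x (hx : x ≤ N + T) => card_filter_le_add_card_filter_le hl.injOn hm.injOn
    (fun p hp => by have := hp.1; omega) hlim hx
  -- `[1, j p + p]` holds `p` values of `q ↦ j q + q`, hence exactly `j p` values of `l`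
  have hl_le_iff : ∀ p ∈ Set.Icc 1 T, l κ ≤ j p + p ↔ κ ≤ j p := fun p hp => by
    have := hcount (j p + p) (by have := hjN p hp; have := hp.2; omega)
    rw [card_filter_le_apply hm hp] at this
    rw [le_iff_le_card_filter_le hl hκ]
    omega
  have hfilter : {p ∈ Icc 1 T | j p + p ≤ l κ} = {p ∈ Icc 1 T | j p < κ} := by
    refine filter_congr fun p hp => ?_
    have hp : p ∈ Set.Icc 1 T := by simpa using hp
    have hne : l κ ≠ j p + p := fun h =>
      ((hlim _).1 ⟨κ, hκ.1, hκ.2, rfl⟩).2.2 ⟨p, hp.1, hp.2, h⟩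
    have := hl_le_iff p hp
    omega
  have := hcount (l κ) ((hlim _).1 ⟨κ, hκ.1, hκ.2, rfl⟩).2.1
  rw [card_filter_le_apply hl hκ, hfilter] at this
  exact this.symm

end CountBelow

section FlagCorrespondence

variable {𝕜 V W : Type*} [Field 𝕜] [AddCommGroup V] [Module 𝕜 V] [AddCommGroup W] [Module 𝕜 W]

theorem Submodule.map_inf_comap_eq_of_map_eq_top {f : W →ₗ[𝕜] V} {U : Submodule 𝕜 W}
    (hU : U.map f = ⊤) (Q : Submodule 𝕜 V) : (U ⊓ Q.comap f).map f = Q := by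
  rw [← Submodule.map_inf_eq_map_inf_comap, hU, top_inf_eq]

theorem Submodule.inf_comap_map_eq_self {f : W →ₗ[𝕜] V} {U P : Submodule 𝕜 W} (hPU : P ≤ U)
    (hP : LinearMap.ker f ⊓ U ≤ P) : U ⊓ (P.map f).comap f = P := by
  rw [Submodule.comap_map_eq, inf_comm, sup_inf_assoc_of_le _ hPU, sup_eq_left.2 hP]

theorem Submodule.finrank_map_add_finrank_ker_inf [FiniteDimensional 𝕜 W] (f : W →ₗ[𝕜] V)
    (P : Submodule 𝕜 W) :
    finrank 𝕜 (P.map f) + finrank 𝕜 ↥(LinearMap.ker f ⊓ P) = finrank 𝕜 P := by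
  have := (f.domRestrict P).finrank_range_add_finrank_ker
  rwa [LinearMap.range_domRestrict, LinearMap.ker_domRestrict,
    ← Submodule.finrank_map_subtype_eq, Submodule.map_comap_subtype, inf_comm] at this

theorem bijOn_inf_comap_flags [FiniteDimensional 𝕜 W] {m : ℕ} {π : ℕ → W →ₗ[𝕜] V}
    {U K : ℕ → Submodule 𝕜 W} {f : ℕ → V →ₗ[𝕜] V} {d e : ℕ → ℕ}
    (hπU : ∀ k < m, (U k).map (π k) = ⊤) (hU : ∀ k, k + 1 < m → U k ≤ U (k + 1))
    (hf : ∀ k, k + 1 < m → ∀ x ∈ U k, f k (π k x) = π (k + 1) x)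
    (hK : ∀ k < m, LinearMap.ker (π k) ⊓ U k = K k)
    (he : ∀ k < m, e k = d k + finrank 𝕜 (K k)) :
    Set.BijOn (fun (Vt : Fin m → Submodule 𝕜 V) (k : Fin m) => U k ⊓ (Vt k).comap (π k))
      {Vt | (∀ k : Fin m, finrank 𝕜 (Vt k) = d k) ∧
        ∀ k : ℕ, ∀ hk : k + 1 < m, (Vt ⟨k, by omega⟩).map (f k) ≤ Vt ⟨k + 1, hk⟩}
      {Wt | (∀ k : Fin m, finrank 𝕜 (Wt k) = e k) ∧
        (∀ k : ℕ, ∀ hk : k + 1 < m, Wt ⟨k, by omega⟩ ≤ Wt ⟨k + 1, hk⟩) ∧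
        (∀ k : Fin m, K k ≤ Wt k) ∧ ∀ k : Fin m, Wt k ≤ U k} := by
  have hfinrank : ∀ k < m, ∀ P : Submodule 𝕜 W, K k ≤ P → P ≤ U k →
      finrank 𝕜 P = finrank 𝕜 (P.map (π k)) + finrank 𝕜 (K k) := fun k hk P hKP hPU => by
    have hker : LinearMap.ker (π k) ⊓ P = K k := by
      rw [← hK k hk] at hKP ⊢
      exact le_antisymm (inf_le_inf_left _ hPU) (le_inf inf_le_left hKP)
    rw [← Submodule.finrank_map_add_finrank_ker_inf (π k) P, hker]
  have hK_le : ∀ k < m, ∀ Q : Submodule 𝕜 V, K k ≤ U k ⊓ Q.comap (π k) := fun k hk Q => by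
    rw [← hK k hk]
    exact fun x ⟨hx, hxU⟩ => ⟨hxU, by simp [LinearMap.mem_ker.1 hx]⟩
  refine ⟨?_, ?_, ?_⟩
  · rintro Vt ⟨hdimV, hflagV⟩
    refine ⟨fun k => ?_, fun k hk => ?_, fun k => hK_le k k.2 _, fun k => inf_le_left⟩
    · rw [he k k.2, hfinrank k k.2 _ (hK_le k k.2 _) inf_le_left,
        Submodule.map_inf_comap_eq_of_map_eq_top (hπU k k.2), hdimV]
    · rintro x ⟨hxU, hxV⟩
      have := hflagV k hk (Submodule.mem_map_of_mem hxV)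
      rw [hf k hk x hxU] at this
      exact ⟨hU k hk hxU, this⟩
  · intro V₁ _ V₂ _ h
    funext k
    simpa only [Submodule.map_inf_comap_eq_of_map_eq_top (hπU k k.2)] using
      congrArg (Submodule.map (π k)) (congrFun h k)
  · rintro Wt ⟨hdimW, hflagW, hKW, hWU⟩
    refine ⟨fun k => (Wt k).map (π k), ⟨fun k => ?_, fun k hk => ?_⟩,
      funext fun k => Submodule.inf_comap_map_eq_self (hWU k) (hK k k.2 ▸ hKW k)⟩
    · have := hfinrank k k.2 (Wt k) (hKW k) (hWU k)
      rw [hdimW, he k k.2] at this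
      dsimp only
      omega
    · rintro _ ⟨_, ⟨x, hx, rfl⟩, rfl⟩
      exact ⟨x, hflagW k hk hx, (hf k hk x (hWU _ hx)).symm⟩

end FlagCorrespondence

section ProjectionsPi

variable {n t : ℕ} {j : ℕ → ℕ}

theorem mem_UspanW_iff {s : ℕ} {x : Ws n t} :
    x ∈ UspanW n t s ↔ ∀ a : Fin (2 * n + 2 * t), 2 * n + s ≤ a → x a = 0 := by
  simp [UspanW]

theorem UspanW_mono : Monotone (UspanW n t) := fun _ _ hs _ hx =>
  mem_UspanW_iff.2 fun a ha => mem_UspanW_iff.1 hx a (by omega)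

theorem finrank_UspanW {s : ℕ} (hs : s ≤ 2 * t) : finrank ℂ (UspanW n t s) = 2 * n + s := by
  classical
  let I : Set (Fin (2 * n + 2 * t)) := {a | (a : ℕ) < 2 * n + s}
  let J : Set (Fin (2 * n + 2 * t)) := {a | 2 * n + s ≤ (a : ℕ)}
  have e := LinearMap.iInfKerProjEquiv ℂ (fun _ => ℂ) (I := I) (J := J)
    (Set.disjoint_left.2 fun a (ha : (a : ℕ) < 2 * n + s) (ha' : 2 * n + s ≤ (a : ℕ)) =>
      absurd ha' (not_le.2 ha))
    (fun a _ => (lt_or_ge (a : ℕ) (2 * n + s)).imp id id)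
  refine e.finrank_eq.trans ?_
  rw [Module.finrank_fintype_fun_eq_card]
  exact Fintype.card_fin_lt_of_le (by omega)

theorem cIdx_injective (s : ℕ) : Function.Injective (cIdx n t j s) := by
  intro b₁ b₂ h
  have h' := congrArg Fin.val h
  unfold cIdx at h'
  split_ifs at h' with h₁ h₂ h₂ <;> dsimp only at h'
  · obtain ⟨hp₁, -, -, hb₁⟩ := Classical.choose_spec h₁
    obtain ⟨hp₂, -, -, hb₂⟩ := Classical.choose_spec h₂
    have : Classical.choose h₁ = Classical.choose h₂ := by omega
    rw [this, hb₂] at hb₁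
    exact Fin.ext hb₁.symm
  · have := (Classical.choose_spec h₁).1
    have := b₂.isLt
    omega
  · have := (Classical.choose_spec h₂).1
    have := b₁.isLt
    omega
  · exact Fin.ext h'

theorem cIdx_lt {s : ℕ} (b : Fin (2 * n)) : (cIdx n t j s b : ℕ) < 2 * n + s := by
  unfold cIdx
  split_ifs with h
  · have := Classical.choose_spec h
    dsimp only
    omega
  · dsimp only
    omega

theorem cIdx_of_eq (hj : Set.InjOn j (Set.Icc 1 (2 * t))) {s p : ℕ} {b : Fin (2 * n)}
    (hp : 1 ≤ p) (hps : p ≤ s) (hpt : p ≤ 2 * t) (hb : j p = b) :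
    (cIdx n t j s b : ℕ) = 2 * n + p - 1 := by
  have h : ∃ q, 1 ≤ q ∧ q ≤ s ∧ q ≤ 2 * t ∧ j q = b := ⟨p, hp, hps, hpt, hb⟩
  obtain ⟨hq, -, hqt, hqb⟩ := Classical.choose_spec h
  rw [cIdx, dif_pos h]
  change 2 * n + Classical.choose h - 1 = _
  rw [hj ⟨hq, hqt⟩ ⟨hp, hpt⟩ (hqb.trans hb.symm)]

theorem cIdx_of_forall_ne {s : ℕ} {b : Fin (2 * n)}
    (hb : ∀ p, 1 ≤ p → p ≤ s → p ≤ 2 * t → j p ≠ b) : (cIdx n t j s b : ℕ) = b := by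
  rw [cIdx, dif_neg fun ⟨p, hp, hps, hpt, h⟩ => hb p hp hps hpt h]

theorem exists_cIdx_eq_iff (hj : Set.InjOn j (Set.Icc 1 (2 * t)))
    (hjn : ∀ p ∈ Set.Icc 1 (2 * t), j p < 2 * n) {s : ℕ} (hs : s ≤ 2 * t)
    (a : Fin (2 * n + 2 * t)) :
    (∃ b, cIdx n t j s b = a) ↔ (a : ℕ) < 2 * n + s ∧ ¬∃ p, 1 ≤ p ∧ p ≤ s ∧ (a : ℕ) = j p := by
  constructor
  · rintro ⟨b, rfl⟩
    refine ⟨cIdx_lt b, fun ⟨p, hp, hps, hpa⟩ => ?_⟩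
    have hjp := hjn p ⟨hp, hps.trans hs⟩
    by_cases hb : ∃ q, 1 ≤ q ∧ q ≤ s ∧ q ≤ 2 * t ∧ j q = b
    · obtain ⟨q, hq, hqs, hqt, hqb⟩ := hb
      rw [cIdx_of_eq hj hq hqs hqt hqb] at hpa
      omega
    · rw [cIdx_of_forall_ne fun q hq hqs hqt => (hb ⟨q, hq, hqs, hqt, ·⟩)] at hpa
      exact hb ⟨p, hp, hps, hps.trans hs, hpa.symm⟩
  · rintro ⟨ha, hD⟩
    by_cases ha' : (a : ℕ) < 2 * n
    · refine ⟨⟨a, ha'⟩, Fin.ext (cIdx_of_forall_ne fun p hp hps _ hpa => hD ⟨p, hp, hps, ?_⟩)⟩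
      exact hpa.symm
    · have hp : 1 ≤ a - 2 * n + 1 ∧ a - 2 * n + 1 ≤ s := by omega
      refine ⟨⟨j (a - 2 * n + 1), hjn _ ⟨hp.1, hp.2.trans hs⟩⟩, Fin.ext ?_⟩
      rw [cIdx_of_eq hj hp.1 hp.2 (hp.2.trans hs) rfl]
      omega

theorem map_piW_UspanW (s : ℕ) : (UspanW n t s).map (piW n t j s) = ⊤ := by
  refine eq_top_iff.2 fun v _ => ⟨Function.extend (cIdx n t j s) v 0,
    mem_UspanW_iff.2 fun a ha => ?_, funext ((cIdx_injective s).extend_apply v 0)⟩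
  refine Function.extend_apply' _ _ _ fun ⟨b, hb⟩ => ?_
  have := cIdx_lt (t := t) (j := j) (s := s) b
  rw [hb] at this
  omega

theorem mem_ker_piW_inf_UspanW_iff (hj : Set.InjOn j (Set.Icc 1 (2 * t)))
    (hjn : ∀ p ∈ Set.Icc 1 (2 * t), j p < 2 * n) {s : ℕ} (hs : s ≤ 2 * t) {x : Ws n t} :
    x ∈ LinearMap.ker (piW n t j s) ⊓ UspanW n t s ↔
      ∀ a : Fin (2 * n + 2 * t), (¬∃ p, 1 ≤ p ∧ p ≤ s ∧ (a : ℕ) = j p) → x a = 0 := by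
  constructor
  · rintro ⟨hker, hU⟩ a ha
    by_cases has : (a : ℕ) < 2 * n + s
    · obtain ⟨b, rfl⟩ := (exists_cIdx_eq_iff hj hjn hs a).2 ⟨has, ha⟩
      exact congrFun (LinearMap.mem_ker.1 hker) b
    · exact mem_UspanW_iff.1 hU a (by omega)
  · intro hx
    refine ⟨LinearMap.mem_ker.2 (funext fun b =>
      hx _ ((exists_cIdx_eq_iff hj hjn hs _).1 ⟨b, rfl⟩).2), mem_UspanW_iff.2 fun a ha => ?_⟩
    refine hx a fun ⟨p, hp, hps, hpa⟩ => ?_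
    have := hjn p ⟨hp, hps.trans hs⟩
    omega

theorem ker_piW_inf_UspanW_eq_span (hj : Set.InjOn j (Set.Icc 1 (2 * t)))
    (hjn : ∀ p ∈ Set.Icc 1 (2 * t), j p < 2 * n) {s : ℕ} (hs : s ≤ 2 * t) :
    LinearMap.ker (piW n t j s) ⊓ UspanW n t s = Submodule.span ℂ
      {x | ∃ p, 1 ≤ p ∧ p ≤ s ∧ ∃ a : Fin (2 * n + 2 * t), (a : ℕ) = j p ∧ x = Pi.single a 1} := by
  classical
  apply le_antisymm
  · intro x hx
    rw [mem_ker_piW_inf_UspanW_iff hj hjn hs] at hx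
    rw [← Finset.univ_sum_single x]
    refine Submodule.sum_mem _ fun a _ => ?_
    by_cases ha : ∃ p, 1 ≤ p ∧ p ≤ s ∧ (a : ℕ) = j p
    · obtain ⟨p, hp, hps, hpa⟩ := ha
      have hsingle : Pi.single a (x a) = x a • Pi.single a (1 : ℂ) := by
        rw [← Pi.single_smul', smul_eq_mul, mul_one]
      rw [hsingle]
      exact Submodule.smul_mem _ _ (Submodule.subset_span ⟨p, hp, hps, a, hpa, rfl⟩)
    · rw [hx a ha, Pi.single_zero]
      exact Submodule.zero_mem _
  · rw [Submodule.span_le]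
    rintro _ ⟨p, hp, hps, a, hpa, rfl⟩
    refine (mem_ker_piW_inf_UspanW_iff hj hjn hs).2 fun a' ha' => Pi.single_eq_of_ne ?_ _
    rintro rfl
    exact ha' ⟨p, hp, hps, hpa⟩

theorem finrank_ker_piW_inf_UspanW {s : ℕ} (hs : s ≤ 2 * t) :
    finrank ℂ ↥(LinearMap.ker (piW n t j s) ⊓ UspanW n t s) = s := by
  have := Submodule.finrank_map_add_finrank_ker_inf (piW n t j s) (UspanW n t s)
  rw [map_piW_UspanW, finrank_top, finrank_UspanW hs, Module.finrank_fin_fun] at this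
  omega

theorem piW_add_one_apply (hj : Set.InjOn j (Set.Icc 1 (2 * t))) {s : ℕ} (hs : s + 1 ≤ 2 * t)
    {x : Ws n t} (hx : x ∈ UspanW n t s) :
    piW n t j (s + 1) x = prK (2 * n) {a | (a : ℕ) = j (s + 1)} (piW n t j s x) := by
  funext b
  simp only [piW, prK, LinearMap.coe_mk, AddHom.coe_mk, Set.mem_ofPred_eq]
  split_ifs with hb
  · refine mem_UspanW_iff.1 hx _ ?_
    rw [cIdx_of_eq hj (by omega) le_rfl hs hb.symm]
    omega
  · congr 1
    apply Fin.ext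
    by_cases h : ∃ p, 1 ≤ p ∧ p ≤ s ∧ p ≤ 2 * t ∧ j p = b
    · obtain ⟨p, hp, hps, hpt, hpb⟩ := h
      rw [cIdx_of_eq hj hp (by omega) hpt hpb, cIdx_of_eq hj hp hps hpt hpb]
    · rw [cIdx_of_forall_ne fun p hp hps hpt => (h ⟨p, hp, hps, hpt, ·⟩), cIdx_of_forall_ne]
      intro p hp hps hpt hpb
      obtain hps | rfl := Nat.le_add_one_iff.1 hps
      · exact h ⟨p, hp, by omega, hpt, hpb⟩
      · exact hb hpb.symm

theorem fdeg_piW_countBelow_apply (hj : StrictMonoOn j (Set.Icc 1 (2 * t)))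
    {J : Finset ℕ} (hJ : ∀ x, (∃ p, 1 ≤ p ∧ p ≤ 2 * t ∧ j p = x) ↔ x ∈ J) (κ : ℕ)
    {x : Ws n t} (hx : x ∈ UspanW n t (countBelow j (2 * t) κ)) :
    fdeg n J κ (piW n t j (countBelow j (2 * t) κ) x) =
      piW n t j (countBelow j (2 * t) (κ + 1)) x := by
  by_cases hκ : κ ∈ J
  · obtain ⟨p, hp, hpt, rfl⟩ := (hJ κ).2 hκ
    rw [countBelow_apply hj ⟨hp, hpt⟩] at hx ⊢
    rw [countBelow_apply_add_one hj ⟨hp, hpt⟩, fdeg, if_pos hκ]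
    obtain ⟨s, rfl⟩ : ∃ s, p = s + 1 := ⟨p - 1, by omega⟩
    exact (piW_add_one_apply hj.injOn hpt hx).symm
  · rw [countBelow_add_one_of_forall_ne fun p hp h => hκ ((hJ κ).1 ⟨p, hp.1, hp.2, h⟩), fdeg,
      if_neg hκ, LinearMap.id_apply]

end ProjectionsPi

theorem lt_two_mul_of_mem_Iprime {n : ℕ} {I : Finset ℕ} (hI : ∀ i ∈ I, 1 ≤ i ∧ i ≤ n - 1)
    {x : ℕ} (hx : x ∈ Iprime n I) : x < 2 * n := by
  obtain hx | hx := Finset.mem_union.1 hx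
  · have := hI x hx
    omega
  · obtain ⟨i, hi, rfl⟩ := Finset.mem_image.1 hx
    have := hI i hi
    omega

/-- the map `μ : (V_1,…,V_{2n-1}) ↦ (π_{h_1}^{-1}(V_1), …,
π_{h_{2n-1}}^{-1}(V_{2n-1}))` is a bijection from the linear degenerate flag variety
`F^{𝐢′}_{2n}` onto the set of tuples `(W_1,…,W_{2n-1})` of subspaces of `W` with
`dim W_k = ℓ_k`, `W_k ⊆ W_{k+1}`, and
`span{e_{j_p+1} : 1 ≤ p ≤ h_k} ⊆ W_k ⊆ span(e_1,…,e_{2n+h_k})`.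
Here `j` enumerates `𝐢′` and `ℓ` enumerates `{1,…,2n+2t} ∖ {j_1+1,…,j_{2t}+2t}`
(both strictly increasingly, given as hypotheses), and `h_k = ℓ_k - k`. -/
theorem mu_bijection_onto_schubert_cell_description (n t : ℕ)
    (I : Finset ℕ) (hI : ∀ i ∈ I, 1 ≤ i ∧ i ≤ n - 1)
    (j : ℕ → ℕ)
    (hjmono : ∀ p q, 1 ≤ p → p < q → q ≤ 2 * t → j p < j q)
    (hjim : ∀ x, (∃ p, 1 ≤ p ∧ p ≤ 2 * t ∧ j p = x) ↔ x ∈ Iprime n I)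
    (l : ℕ → ℕ)
    (hlmono : ∀ p q, 1 ≤ p → p < q → q ≤ 2 * n → l p < l q)
    (hlim : ∀ x, (∃ k, 1 ≤ k ∧ k ≤ 2 * n ∧ l k = x) ↔
      (1 ≤ x ∧ x ≤ 2 * n + 2 * t ∧ ¬∃ p, 1 ≤ p ∧ p ≤ 2 * t ∧ x = j p + p)) :
    Set.BijOn
      (fun (Vt : Fin (2 * n - 1) → Submodule ℂ (Vs n)) (k : Fin (2 * n - 1)) =>
        PreW n t j (l (k.1 + 1) - (k.1 + 1)) (Vt k))
      (Fpr n (Iprime n I))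
      {Wt : Fin (2 * n - 1) → Submodule ℂ (Ws n t) |
        (∀ k : Fin (2 * n - 1), finrank ℂ ↥(Wt k) = l (k.1 + 1)) ∧
        (∀ k : ℕ, ∀ hk : k + 1 < 2 * n - 1, Wt ⟨k, by omega⟩ ≤ Wt ⟨k + 1, hk⟩) ∧
        (∀ k : Fin (2 * n - 1),
          Submodule.span ℂ {x : Ws n t | ∃ p, 1 ≤ p ∧ p ≤ l (k.1 + 1) - (k.1 + 1) ∧
            ∃ a : Fin (2 * n + 2 * t), (a : ℕ) = j p ∧ x = Pi.single a 1} ≤ Wt k) ∧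
        (∀ k : Fin (2 * n - 1), Wt k ≤ UspanW n t (l (k.1 + 1) - (k.1 + 1)))} := by
  have hj : StrictMonoOn j (Set.Icc 1 (2 * t)) := fun p hp q hq hpq => hjmono p q hp.1 hpq hq.2
  have hl : StrictMonoOn l (Set.Icc 1 (2 * n)) := fun p hp q hq hpq => hlmono p q hp.1 hpq hq.2
  have hjn : ∀ p ∈ Set.Icc 1 (2 * t), j p < 2 * n := fun p hp =>
    lt_two_mul_of_mem_Iprime hI ((hjim (j p)).1 ⟨p, hp.1, hp.2, rfl⟩)
  have hs : ∀ k < 2 * n - 1, l (k + 1) - (k + 1) = countBelow j (2 * t) (k + 1) := fun k hk => by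
    rw [eq_add_countBelow hj hjn hl hlim ⟨by omega, by omega⟩, Nat.add_sub_cancel_left]
  refine bijOn_inf_comap_flags (π := fun k => piW n t j (l (k + 1) - (k + 1)))
    (U := fun k => UspanW n t (l (k + 1) - (k + 1))) (f := fun k => fdeg n (Iprime n I) (k + 1))
    (K := fun k => Submodule.span ℂ {x : Ws n t | ∃ p, 1 ≤ p ∧ p ≤ l (k + 1) - (k + 1) ∧
      ∃ a : Fin (2 * n + 2 * t), (a : ℕ) = j p ∧ x = Pi.single a 1})
    (d := fun k => k + 1) (e := fun k => l (k + 1))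
    (fun k _ => map_piW_UspanW _) (fun k hk => ?_) (fun k hk x hx => ?_) (fun k hk => ?_)
    (fun k hk => ?_)
  · rw [hs k (by omega), hs (k + 1) hk]
    exact UspanW_mono (countBelow_mono (by omega))
  · rw [hs k (by omega)] at hx ⊢
    rw [hs (k + 1) hk]
    exact fdeg_piW_countBelow_apply hj hjim (k + 1) hx
  · rw [hs k hk]
    exact ker_piW_inf_UspanW_eq_span hj.injOn hjn (countBelow_le _)
  · rw [hs k hk, ← ker_piW_inf_UspanW_eq_span hj.injOn hjn (countBelow_le _),
      finrank_ker_piW_inf_UspanW (countBelow_le _)]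
    exact eq_add_countBelow hj hjn hl hlim ⟨by omega, by omega⟩
end
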